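/- Let d, w₁, w₂ be odd positive integers and χ a Dirichlet character of conductor d. Then for all n ≥ 0: w₂^n ∑_{l=0}^{d w₂ − 1} (−1)^l χ(l) 𝓔_{n, λ/w₂, χ}(w₁ x + (w₁/w₂) l) = w₁^n ∑_{l=0}^{d w₁ − 1} (−1)^l χ(l) 𝓔_{n, λ/w₁, χ}(w₂ x + (w₂/w₁) l), as an identity of polynomials in x over ℚ(λ) (equivalently, for every nonzero λ ∈ ℂ). -/

import Mathlib

open scoped Nat

/-- The degenerate falling factorial `(x|λ)_n = x(x−λ)⋯(x−(n−1)λ)`. -/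
noncomputable def degFall {R : Type*} [CommRing R] (x lam : R) (n : ℕ) : R :=
  ∏ j ∈ Finset.range n, (x - (j : R) * lam)

/-- `(1+λt)^{y/λ} := ∑_{n≥0} (y|λ)_n tⁿ/n!` as a formal power series. -/
noncomputable def degSeries {R : Type*} [CommRing R] [Algebra ℚ R] (y lam : R) :
    PowerSeries R :=
  PowerSeries.mk fun n => (n ! : ℚ)⁻¹ • degFall y lam n

/-- The generating identity defining the generalized degenerate Euler polynomials
`𝓔_{n,λ,χ}(x)` attached to χ, with parameter `mu`:
`((1+μt)^{d/μ}+1)·∑ 𝓔_{n,μ,χ}(x) tⁿ/n! = 2(∑_{a<d}(−1)^a χ(a)(1+μt)^{a/μ})(1+μt)^{x/μ}`. -/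
noncomputable def genDegEulerRel (d : ℕ) (χ : DirichletCharacter ℂ d) (mu : ℂ)
    (E : ℕ → Polynomial ℂ) : Prop :=
  (degSeries (Polynomial.C (d : ℂ)) (Polynomial.C mu) + 1) *
      PowerSeries.mk (fun n => (n ! : ℂ)⁻¹ • E n)
    = 2 * ((∑ a ∈ Finset.range d,
        ((-1 : ℂ) ^ a * χ (a : ZMod d)) • degSeries (Polynomial.C (a : ℂ)) (Polynomial.C mu)) *
        degSeries Polynomial.X (Polynomial.C mu))

/-!
Write `e(y) = (1+λt)^{y/λ}` and `A_c = ∑_{a<d} (-1)^a χ(a) e(ca)`, so that `e(y+z) = e(y) e(z)`.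
Substituting `t ↦ wt`, `x ↦ w'x + (w'/w) l` in the generating relation of `𝓔_{n,λ/w,χ}`,
weighting by `(-1)^l χ(l)` and summing over `l < dw` gives, after writing `l = dq + a`
(`d` odd, so the sign becomes `(-1)^q`) and summing the geometric series in `-e(w'd)` (`w` odd),
`(e(wd)+1)(e(w'd)+1) G_{w,w'} = 2 A_w A_{w'} e(ww'x) (e(ww'd)+1)`,
where `G_{w,w'}` generates the left-hand side. The right side is symmetric in `w, w'` and
`e(·)+1` has constant term `2`, so `G_{w₂,w₁} = G_{w₁,w₂}`.
-/

open Finset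

section DegenerateFallingFactorial

variable {R : Type*} [CommRing R]

lemma degFall_succ (y lam : R) (n : ℕ) :
    degFall y lam (n + 1) = degFall y lam n * (y - n * lam) :=
  prod_range_succ _ _

lemma degFall_zero_left (lam : R) (n : ℕ) : degFall 0 lam (n + 1) = 0 :=
  prod_eq_zero (mem_range.2 n.succ_pos) (by simp)

lemma degFall_add (y z lam : R) (n : ℕ) :
    degFall (y + z) lam n = ∑ ij ∈ antidiagonal n,
      (n.choose ij.1 : R) * (degFall y lam ij.1 * degFall z lam ij.2) := by
  induction n with
  | zero => simp [degFall]
  | succ n ih =>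
    rw [sum_antidiagonal_choose_succ_mul (fun i j => degFall y lam i * degFall z lam j),
      ← sum_add_distrib, degFall_succ, ih, sum_mul]
    refine sum_congr rfl fun ij hij => ?_
    have hn : (n : R) = ij.1 + ij.2 := by rw [← (mem_antidiagonal.1 hij)]; push_cast; ring
    rw [Nat.choose_symm_of_eq_add (mem_antidiagonal.1 hij).symm, degFall_succ, degFall_succ, hn]
    ring

lemma map_degFall {S : Type*} [CommRing S] (f : R →+* S) (y lam : R) (n : ℕ) :
    f (degFall y lam n) = degFall (f y) (f lam) n := by
  simp [degFall, map_prod]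

lemma degFall_mul_mul (c y lam : R) (n : ℕ) :
    degFall (c * y) (c * lam) n = c ^ n * degFall y lam n := by
  calc ∏ j ∈ range n, (c * y - j * (c * lam)) = ∏ j ∈ range n, (c * (y - j * lam)) :=
        prod_congr rfl fun _ _ => by ring
    _ = c ^ n * degFall y lam n := by rw [prod_mul_distrib, prod_const, card_range]; rfl

end DegenerateFallingFactorial

section DegenerateExponential

open PowerSeries

variable {R : Type*} [CommRing R] [Algebra ℚ R]

@[simp]
lemma coeff_degSeries (y lam : R) (n : ℕ) :
    coeff n (degSeries y lam) = (n ! : ℚ)⁻¹ • degFall y lam n :=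
  coeff_mk _ _

lemma constantCoeff_degSeries (y lam : R) : constantCoeff (degSeries y lam) = 1 := by
  simp [← coeff_zero_eq_constantCoeff_apply, degFall]

lemma degSeries_zero (lam : R) : degSeries 0 lam = 1 := by
  ext (_ | n)
  · simp [degFall]
  · simp [degFall_zero_left, coeff_one]

lemma degSeries_add (y z lam : R) :
    degSeries (y + z) lam = degSeries y lam * degSeries z lam := by
  ext n
  rw [coeff_mul, coeff_degSeries, degFall_add, smul_sum]
  refine sum_congr rfl fun ij hij => ?_
  obtain rfl := mem_antidiagonal.1 hij
  rw [coeff_degSeries, coeff_degSeries, smul_mul_smul_comm, ← nsmul_eq_mul,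
    ← Nat.cast_smul_eq_nsmul ℚ, smul_smul]
  congr 1
  rw [Nat.cast_add_choose]
  field_simp

lemma degSeries_natCast_mul (k : ℕ) (y lam : R) :
    degSeries (k * y) lam = degSeries y lam ^ k := by
  induction k with
  | zero => simpa using degSeries_zero lam
  | succ k ih => rw [Nat.cast_succ, add_one_mul, degSeries_add, ih, pow_succ]

lemma rescale_degSeries (c y lam : R) :
    rescale c (degSeries y lam) = degSeries (c * y) (c * lam) := by
  ext n
  simp [degFall_mul_mul]

lemma map_degSeries {S : Type*} [CommRing S] [Algebra ℚ S] (f : R →+* S) (y lam : R) :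
    (degSeries y lam).map f = degSeries (f y) (f lam) := by
  ext n
  simp [map_rat_smul, map_degFall]

lemma degSeries_add_one_ne_zero [CharZero R] (y lam : R) : degSeries y lam + 1 ≠ 0 := by
  intro h
  have := congrArg constantCoeff h
  rw [map_add, constantCoeff_degSeries, map_one, map_zero, one_add_one_eq_two] at this
  exact two_ne_zero this

end DegenerateExponential

lemma sum_range_mul_eq_mul_geom_sum {S : Type*} [CommSemiring S] (f : ℕ → S) (r : S) (d v : ℕ)
    (hf : ∀ q a, f (d * q + a) = r ^ q * f a) :
    ∑ l ∈ range (d * v), f l = (∑ a ∈ range d, f a) * ∑ q ∈ range v, r ^ q := by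
  induction v with
  | zero => simp
  | succ v ih =>
    rw [mul_add_one, sum_range_add, ih, sum_range_succ, mul_add]
    simp_rw [hf, ← mul_sum]
    ring

lemma Odd.geom_sum_neg_mul_add_one {S : Type*} [CommRing S] {v : ℕ} (hv : Odd v) (b : S) :
    (∑ j ∈ range v, (-b) ^ j) * (b + 1) = b ^ v + 1 := by
  have h := geom_sum_mul (-b) v
  rw [hv.neg_pow] at h
  linear_combination -h

noncomputable section GeneralizedDegenerateEuler

open Polynomial

variable {d : ℕ} (χ : DirichletCharacter ℂ d)

def signedChar (l : ℕ) : ℂ := (-1) ^ l * χ l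

def egf (E : ℕ → ℂ[X]) : PowerSeries ℂ[X] := PowerSeries.mk fun n => (n ! : ℂ)⁻¹ • E n

/-- `∑_{a<d} (-1)^a χ(a) (1+λt)^{ca/λ}`. -/
def charDegSeries (c lam : ℂ) : PowerSeries ℂ[X] :=
  ∑ a ∈ range d, signedChar χ a • degSeries (C (c * a)) (C lam)

/-- The exponential generating function, in `t`, of
`w^n ∑_{l<dw} (-1)^l χ(l) E_n(w'x + (w'/w) l)`. -/
def twistedEgf (E : ℕ → ℂ[X]) (w w' : ℕ) : PowerSeries ℂ[X] :=
  ∑ l ∈ range (d * w), signedChar χ l • PowerSeries.rescale (C (w : ℂ))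
    ((egf E).map (compRingHom (C (w' : ℂ) * X + C ((w' : ℂ) / w * l))))

lemma coeff_twistedEgf (E : ℕ → ℂ[X]) (w w' n : ℕ) :
    PowerSeries.coeff n (twistedEgf χ E w w') = (n ! : ℂ)⁻¹ • (C ((w : ℂ) ^ n) *
      ∑ l ∈ range (d * w),
        C (signedChar χ l) * (E n).comp (C (w' : ℂ) * X + C ((w' : ℂ) / w * l))) := by
  simp only [twistedEgf, egf, map_sum, PowerSeries.coeff_smul, PowerSeries.coeff_rescale,
    PowerSeries.coeff_map, PowerSeries.coeff_mk, coe_compRingHom_apply]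
  rw [mul_sum, smul_sum]
  refine sum_congr rfl fun l _ => ?_
  rw [smul_comp]
  simp only [Polynomial.smul_eq_C_mul, C_pow]
  ring

variable {χ}

lemma genDegEulerRel.mul_rescale_map_egf {w lam : ℂ} (hw : w ≠ 0) {E : ℕ → ℂ[X]}
    (hE : genDegEulerRel d χ (lam / w) E) (u : ℂ[X]) :
    (degSeries (C (w * d)) (C lam) + 1) *
        PowerSeries.rescale (C w) ((egf E).map (compRingHom u))
      = 2 * (charDegSeries χ w lam * degSeries (C w * u) (C lam)) := by
  set Φ : PowerSeries ℂ[X] →+* PowerSeries ℂ[X] :=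
    (PowerSeries.rescale (C w)).comp (PowerSeries.map (compRingHom u))
  have hdeg : ∀ y, Φ (degSeries y (C (lam / w))) = degSeries (C w * y.comp u) (C lam) := by
    intro y
    simp [Φ, map_degSeries, rescale_degSeries, ← C_mul, mul_div_cancel₀ _ hw]
  have hsmul : ∀ (c : ℂ) f, Φ (c • f) = c • Φ f := by
    intro c f
    ext n
    simp [Φ]
  have h := congrArg Φ hE
  simp only [map_mul, map_add, map_one, map_ofNat, map_sum, hsmul, hdeg,
    C_comp, X_comp] at h
  simpa only [Φ, egf, charDegSeries, signedChar, C_mul, RingHom.coe_comp, Function.comp_apply]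
    using h

lemma signedChar_mul_add (hd : Odd d) (q a : ℕ) :
    signedChar χ (d * q + a) = (-1) ^ q * signedChar χ a := by
  have hχ : χ ((d * q + a : ℕ) : ZMod d) = χ a := by simp
  rw [signedChar, signedChar, hχ, pow_add, pow_mul, hd.neg_one_pow]
  ring

lemma sum_signedChar_smul_degSeries (hd : Odd d) (c lam : ℂ) (v : ℕ) :
    ∑ l ∈ range (d * v), signedChar χ l • degSeries (C (c * l)) (C lam)
      = charDegSeries χ c lam * ∑ q ∈ range v, (-degSeries (C (c * d)) (C lam)) ^ q := by
  rw [charDegSeries, sum_range_mul_eq_mul_geom_sum _ _ d v fun q a => ?_]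
  have hshift : C (c * ((d * q + a : ℕ) : ℂ)) = (q : ℂ[X]) * C (c * d) + C (c * a) := by
    rw [← map_natCast C, ← C_mul, ← C_add]
    congr 1
    push_cast
    ring
  rw [signedChar_mul_add hd, hshift, degSeries_add, degSeries_natCast_mul]
  simp only [Algebra.smul_def, map_mul, map_pow, map_neg, map_one]
  ring

lemma genDegEulerRel.mul_twistedEgf (hd : Odd d) {w : ℕ} (hw : Odd w) (w' : ℕ) (lam : ℂ)
    {E : ℕ → ℂ[X]} (hE : genDegEulerRel d χ (lam / w) E) :
    (degSeries (C ((w : ℂ) * d)) (C lam) + 1) * (degSeries (C ((w' : ℂ) * d)) (C lam) + 1) *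
        twistedEgf χ E w w'
      = 2 * (charDegSeries χ w lam * charDegSeries χ w' lam *
          degSeries (C ((w : ℂ) * w') * X) (C lam) *
          (degSeries (C ((w : ℂ) * w' * d)) (C lam) + 1)) := by
  have hw0 : (w : ℂ) ≠ 0 := Nat.cast_ne_zero.2 hw.pos.ne'
  set D := degSeries (C ((w : ℂ) * w') * X) (C lam)
  have hshift (l : ℕ) : degSeries (C (w : ℂ) * (C (w' : ℂ) * X + C ((w' : ℂ) / w * l))) (C lam)
      = D * degSeries (C ((w' : ℂ) * l)) (C lam) := by
    rw [← degSeries_add, mul_add, ← mul_assoc, ← C_mul, ← C_mul, ← mul_assoc,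
      mul_div_cancel₀ _ hw0]
  have hsum : (degSeries (C ((w : ℂ) * d)) (C lam) + 1) * twistedEgf χ E w w'
      = 2 * (charDegSeries χ w lam * D *
          ∑ l ∈ range (d * w), signedChar χ l • degSeries (C ((w' : ℂ) * l)) (C lam)) := by
    simp only [twistedEgf, mul_sum]
    refine sum_congr rfl fun l _ => ?_
    rw [mul_smul_comm, hE.mul_rescale_map_egf hw0, hshift, mul_smul_comm, mul_smul_comm,
      mul_assoc]
  have hpow :
      degSeries (C ((w' : ℂ) * d)) (C lam) ^ w = degSeries (C ((w : ℂ) * w' * d)) (C lam) := by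
    rw [← degSeries_natCast_mul, ← map_natCast C, ← C_mul, mul_assoc]
  calc _ = 2 * (charDegSeries χ w lam * D * (charDegSeries χ w' lam *
        ((∑ q ∈ range w, (-degSeries (C ((w' : ℂ) * d)) (C lam)) ^ q) *
          (degSeries (C ((w' : ℂ) * d)) (C lam) + 1)))) := by
        rw [mul_right_comm, hsum, sum_signedChar_smul_degSeries hd]
        ring
    _ = _ := by
        rw [hw.geom_sum_neg_mul_add_one, hpow]
        ring

end GeneralizedDegenerateEuler

theorem genDegEuler_symmetry_sum_general (d w₁ w₂ : ℕ)
    (hd : Odd d) (hw₁ : Odd w₁) (hw₂ : Odd w₂)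
    (χ : DirichletCharacter ℂ d) (lam : ℂ)
    (E₁ E₂ : ℕ → Polynomial ℂ)
    (hE₁ : genDegEulerRel d χ (lam / w₁) E₁)
    (hE₂ : genDegEulerRel d χ (lam / w₂) E₂)
    (n : ℕ) :
    Polynomial.C ((w₂ : ℂ) ^ n) *
        ∑ l ∈ Finset.range (d * w₂),
          Polynomial.C ((-1 : ℂ) ^ l * χ (l : ZMod d)) *
            (E₂ n).comp (Polynomial.C (w₁ : ℂ) * Polynomial.X +
              Polynomial.C ((w₁ : ℂ) / (w₂ : ℂ) * l))
      = Polynomial.C ((w₁ : ℂ) ^ n) *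
          ∑ l ∈ Finset.range (d * w₁),
            Polynomial.C ((-1 : ℂ) ^ l * χ (l : ZMod d)) *
              (E₁ n).comp (Polynomial.C (w₂ : ℂ) * Polynomial.X +
                Polynomial.C ((w₂ : ℂ) / (w₁ : ℂ) * l)) := by
  have hsymm : twistedEgf χ E₂ w₂ w₁ = twistedEgf χ E₁ w₁ w₂ := by
    refine mul_left_cancel₀ (mul_ne_zero
      (degSeries_add_one_ne_zero (Polynomial.C ((w₂ : ℂ) * d)) (Polynomial.C lam))
      (degSeries_add_one_ne_zero (Polynomial.C ((w₁ : ℂ) * d)) (Polynomial.C lam))) ?_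
    rw [hE₂.mul_twistedEgf hd hw₂ w₁, mul_comm (degSeries _ _ + 1),
      hE₁.mul_twistedEgf hd hw₁ w₂, mul_comm (w₂ : ℂ) w₁]
    ring
  have hn := congrArg (PowerSeries.coeff n) hsymm
  rw [coeff_twistedEgf, coeff_twistedEgf] at hn
  exact smul_right_injective _ (inv_ne_zero (Nat.cast_ne_zero.2 n.factorial_ne_zero)) hn

/-- identity of symmetry
`w₂^n ∑_{l<dw₂} (−1)^l χ(l) 𝓔_{n,λ/w₂,χ}(w₁x + (w₁/w₂)l)
 = w₁^n ∑_{l<dw₁} (−1)^l χ(l) 𝓔_{n,λ/w₁,χ}(w₂x + (w₂/w₁)l)`,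
as polynomials in x over ℂ, for a fixed nonzero λ ∈ ℂ. -/
theorem genDegEuler_symmetry_sum (d w₁ w₂ : ℕ) (hd0 : 0 < d) (hw₁0 : 0 < w₁) (hw₂0 : 0 < w₂)
    (hd : Odd d) (hw₁ : Odd w₁) (hw₂ : Odd w₂)
    (χ : DirichletCharacter ℂ d) (hχ : χ.conductor = d) (lam : ℂ) (hlam : lam ≠ 0)
    (E₁ E₂ : ℕ → Polynomial ℂ)
    (hE₁ : genDegEulerRel d χ (lam / w₁) E₁)
    (hE₂ : genDegEulerRel d χ (lam / w₂) E₂)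
    (n : ℕ) :
    Polynomial.C ((w₂ : ℂ) ^ n) *
        ∑ l ∈ Finset.range (d * w₂),
          Polynomial.C ((-1 : ℂ) ^ l * χ (l : ZMod d)) *
            (E₂ n).comp (Polynomial.C (w₁ : ℂ) * Polynomial.X +
              Polynomial.C ((w₁ : ℂ) / (w₂ : ℂ) * l))
      = Polynomial.C ((w₁ : ℂ) ^ n) *
          ∑ l ∈ Finset.range (d * w₁),
            Polynomial.C ((-1 : ℂ) ^ l * χ (l : ZMod d)) *
              (E₁ n).comp (Polynomial.C (w₂ : ℂ) * Polynomial.X +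
                Polynomial.C ((w₂ : ℂ) / (w₁ : ℂ) * l)) :=
  genDegEuler_symmetry_sum_general d w₁ w₂ hd hw₁ hw₂ χ lam E₁ E₂ hE₁ hE₂ n
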